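/- arXiv:2507.13256 — 2 statements merged into one kernel-verified Lean document; each statement's English description precedes it below -/
import Mathlib

section
/- Let G = (I_N, (A_i)_{i∈I_N}, (V_i)_{i∈I_N}) be an N-player game that is an α-potential game with α-potential function Φ for some α ≥ 0. Then for every ε > 0, if a strategy profile a* ∈ ∏_{j∈I_N} A_j satisfies Φ(a*) ≤ inf_{a ∈ ∏_j A_j} Φ(a) + ε, then a* is an (α + ε)-Nash equilibrium of G, i.e. for every player i ∈ I_N and every a_i' ∈ A_i, V_i(a*) ≤ V_i((a_i', a*_{-i})) + α + ε. -/
/-- In an `α`-potential game with `α`-potential function `Φ`,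
any strategy profile `astar` that minimizes `Φ` up to `ε` is an `(α + ε)`-Nash
equilibrium: no player can decrease her cost by more than `α + ε` by a
unilateral deviation. -/
theorem alpha_potential_near_minimizer_is_epsilon_nash
    {N : ℕ} (A : Fin N → Type*) [∀ i, Nonempty (A i)]
    (V : Fin N → (∀ j, A j) → ℝ) (Φ : (∀ j, A j) → ℝ) (α : ℝ) (hα : 0 ≤ α)
    (hpot : ∀ (i : Fin N) (a : ∀ j, A j) (a' : A i),
      |V i (Function.update a i a') - V i a - (Φ (Function.update a i a') - Φ a)| ≤ α)
    (hbdd : BddBelow (Set.range Φ))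
    (ε : ℝ) (hε : 0 < ε) (astar : ∀ j, A j)
    (hmin : Φ astar ≤ (⨅ a, Φ a) + ε) :
    ∀ (i : Fin N) (a' : A i),
      V i astar ≤ V i (Function.update astar i a') + α + ε := by
  intro i a'
  have hinf : (⨅ a, Φ a) ≤ Φ (Function.update astar i a') := ciInf_le hbdd _
  have h := hpot i astar a'
  have h2 := abs_le.mp h
  have : Φ astar - Φ (Function.update astar i a') ≤ ε := by linarith
  linarith [h2.1]
end

section
/- Let A be a nonempty convex subset of a real vector space E, let f : A → ℝ have a linear derivative Df : A × E → ℝ, and let a ∈ A and u, v ∈ E be such that a + r u + s v ∈ A for all r, s ∈ [0,1]. Suppose that the map c ↦ Df(c; u) admits a linear derivative D²f(·; u, ·) : A × E → ℝ, that (r, s) ↦ D²f(a + r u + s v; u, v) is jointly continuous on [0,1]², and that for each s ∈ [0,1] the map r ↦ Df(a + r u + s v; u) is continuous on [0,1]. Then f(a + u + v) − f(a + u) − f(a + v) + f(a) = ∫₀¹ ∫₀¹ D²f(a + r u + s v; u, v) ds dr. -/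
/-!
Both sides are computed by the fundamental theorem of calculus along segments. A linear
derivative only controls slopes from a point of `A` towards another point of `A`; on a segment
inside `A`, aiming at its two endpoints yields the right and the left derivative of the
restriction at every point, which suffices for the fundamental theorem of calculus once the
derivative is continuous. Applied to `f` along `u` on the edges `s = 0` and `s = 1`, and to
`c ↦ Df c u` along `v` for each `r`, this turns the double integral of `D²f` into the
second-order difference of `f`.
-/

open Filter Set Topology

section OneSided

variable {F : Type*} [NormedAddCommGroup F] [NormedSpace ℝ F] {g g' : ℝ → F} {a b : ℝ}

theorem continuousOn_Icc_of_hasDerivWithinAt_Ioi_Iio (hab : a ≤ b)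
    (hright : ∀ t ∈ Ico a b, HasDerivWithinAt g (g' t) (Ioi t) t)
    (hleft : ∀ t ∈ Ioc a b, HasDerivWithinAt g (g' t) (Iio t) t) :
    ContinuousOn g (Icc a b) := by
  intro t ⟨hat, htb⟩
  have below : ContinuousWithinAt g (Icc a t) t := by
    rcases hat.eq_or_lt with rfl | hat
    · simpa only [Icc_self] using continuousWithinAt_singleton
    · exact (continuousWithinAt_Iio_iff_Iic.mp
        (hleft t ⟨hat, htb⟩).continuousWithinAt).mono Icc_subset_Iic_self
  have above : ContinuousWithinAt g (Icc t b) t := by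
    rcases htb.eq_or_lt with rfl | htb
    · simpa only [Icc_self] using continuousWithinAt_singleton
    · exact (continuousWithinAt_Ioi_iff_Ici.mp
        (hright t ⟨hat, htb⟩).continuousWithinAt).mono Icc_subset_Ici_self
  simpa only [Icc_union_Icc_eq_Icc hat htb] using below.union above

theorem intervalIntegral.integral_eq_sub_of_hasDerivWithinAt_Ioi_Iio [CompleteSpace F]
    (hab : a ≤ b)
    (hright : ∀ t ∈ Ico a b, HasDerivWithinAt g (g' t) (Ioi t) t)
    (hleft : ∀ t ∈ Ioc a b, HasDerivWithinAt g (g' t) (Iio t) t)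
    (hcont : ContinuousOn g' (Icc a b)) :
    ∫ t in a..b, g' t = g b - g a :=
  integral_eq_sub_of_hasDeriv_right_of_le hab
    (continuousOn_Icc_of_hasDerivWithinAt_Ioi_Iio hab hright hleft)
    (fun t ht => hright t (Ioo_subset_Ico_self ht)) (hcont.intervalIntegrable_of_Icc hab)

end OneSided

section LinearDerivative

variable {E : Type*} [AddCommGroup E] [Module ℝ E]

structure HasLinearDerivative (A : Set E) (f : E → ℝ) (Df : E → E → ℝ) : Prop where
  isLinearMap : ∀ c ∈ A, IsLinearMap ℝ (Df c)
  tendsto_slope : ∀ c ∈ A, ∀ c' ∈ A,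
    Tendsto (fun ε : ℝ => (f (c + ε • (c' - c)) - f c) / ε) (𝓝[>] 0) (𝓝 (Df c (c' - c)))

namespace HasLinearDerivative

variable {A : Set E} {f : E → ℝ} {Df : E → E → ℝ}

theorem hasDerivWithinAt_segment (hf : HasLinearDerivative A f Df) {c c' : E}
    (hc : c ∈ A) (hc' : c' ∈ A) :
    HasDerivWithinAt (fun ε : ℝ => f (c + ε • (c' - c))) (Df c (c' - c)) (Ioi 0) 0 := by
  rw [hasDerivWithinAt_iff_tendsto_slope' self_notMem_Ioi, slope_fun_def_field]
  simpa only [sub_zero, zero_smul, add_zero] using hf.tendsto_slope c hc c' hc'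

/-- The slope towards `c + μ • w ∈ A`, reparametrised by `τ ↦ (τ - t) / μ`; the sign of `μ`
decides on which side of `t` the derivative is obtained. -/
theorem hasDerivWithinAt_line (hf : HasLinearDerivative A f Df) {c w : E} {μ t : ℝ}
    (hc : c ∈ A) (hμ : μ ≠ 0) (hcμ : c + μ • w ∈ A) {s : Set ℝ}
    (hs : MapsTo (fun τ => (τ - t) / μ) s (Ioi 0)) :
    HasDerivWithinAt (fun τ => f (c + (τ - t) • w)) (Df c w) s t := by
  have hrescale : HasDerivWithinAt (fun τ : ℝ => (τ - t) / μ) μ⁻¹ s t := by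
    simpa only [one_div, id_eq] using (((hasDerivAt_id t).sub_const t).div_const μ).hasDerivWithinAt
  have hcomp := (hf.hasDerivWithinAt_segment hc hcμ).comp_of_eq t hrescale hs (by simp)
  rw [add_sub_cancel_left, (hf.isLinearMap c hc).map_smul, smul_eq_mul,
    mul_comm μ, mul_inv_cancel_right₀ hμ] at hcomp
  refine hcomp.congr (fun τ _ => ?_) (by simp)
  simp only [Function.comp, smul_smul, div_mul_cancel₀ _ hμ]

theorem sub_eq_integral (hf : HasLinearDerivative A f Df) {p w : E}
    (hseg : ∀ t ∈ Icc (0 : ℝ) 1, p + t • w ∈ A)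
    (hcont : ContinuousOn (fun t : ℝ => Df (p + t • w) w) (Icc 0 1)) :
    f (p + w) - f p = ∫ t in (0 : ℝ)..1, Df (p + t • w) w := by
  have hshift : ∀ t : ℝ, (fun τ : ℝ => f (p + τ • w)) = fun τ => f (p + t • w + (τ - t) • w) :=
    fun t => funext fun τ => by congr 1; module
  have hright : ∀ t ∈ Ico (0 : ℝ) 1,
      HasDerivWithinAt (fun τ => f (p + τ • w)) (Df (p + t • w) w) (Ioi t) t := by
    intro t ht
    rw [hshift t]
    refine hf.hasDerivWithinAt_line (hseg t (Ico_subset_Icc_self ht)) (sub_pos.2 ht.2).ne' ?_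
      fun τ hτ => div_pos (sub_pos.2 hτ) (sub_pos.2 ht.2)
    convert hseg 1 (right_mem_Icc.2 zero_le_one) using 1; module
  have hleft : ∀ t ∈ Ioc (0 : ℝ) 1,
      HasDerivWithinAt (fun τ => f (p + τ • w)) (Df (p + t • w) w) (Iio t) t := by
    intro t ht
    rw [hshift t]
    refine hf.hasDerivWithinAt_line (hseg t (Ioc_subset_Icc_self ht)) (neg_ne_zero.2 ht.1.ne') ?_
      fun τ hτ => div_pos_of_neg_of_neg (sub_neg.2 hτ) (neg_neg_of_pos ht.1)
    convert hseg 0 (left_mem_Icc.2 zero_le_one) using 1; module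
  simpa only [one_smul, zero_smul, add_zero] using
    (intervalIntegral.integral_eq_sub_of_hasDerivWithinAt_Ioi_Iio zero_le_one hright hleft
      hcont).symm

end HasLinearDerivative

end LinearDerivative

theorem secondOrder_linearDerivative_rect_eq_double_integral_general
    {E : Type*} [AddCommGroup E] [Module ℝ E]
    (A : Set E)
    (f : E → ℝ) (Df : E → E → ℝ)
    (hlin : ∀ c ∈ A, IsLinearMap ℝ (Df c))
    (hderiv : ∀ c ∈ A, ∀ c' ∈ A,
      Tendsto (fun ε : ℝ => (f (c + ε • (c' - c)) - f c) / ε) (nhdsWithin 0 (Set.Ioi 0))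
        (nhds (Df c (c' - c))))
    (a : E) (u v : E)
    (hrect : ∀ r ∈ Set.Icc (0:ℝ) 1, ∀ s ∈ Set.Icc (0:ℝ) 1, a + r • u + s • v ∈ A)
    (D2f : E → E → ℝ)
    (hlin2 : ∀ c ∈ A, IsLinearMap ℝ (D2f c))
    (hderiv2 : ∀ c ∈ A, ∀ c' ∈ A,
      Tendsto (fun ε : ℝ => (Df (c + ε • (c' - c)) u - Df c u) / ε) (nhdsWithin 0 (Set.Ioi 0))
        (nhds (D2f c (c' - c))))
    (hcont2 : ContinuousOn (fun p : ℝ × ℝ => D2f (a + p.1 • u + p.2 • v) v)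
      (Set.Icc 0 1 ×ˢ Set.Icc 0 1))
    (hcont1 : ∀ s ∈ Set.Icc (0:ℝ) 1,
      ContinuousOn (fun r : ℝ => Df (a + r • u + s • v) u) (Set.Icc 0 1)) :
    f (a + u + v) - f (a + u) - f (a + v) + f a
      = ∫ r in (0:ℝ)..1, ∫ s in (0:ℝ)..1, D2f (a + r • u + s • v) v := by
  have hf : HasLinearDerivative A f Df := ⟨hlin, hderiv⟩
  have hDf : HasLinearDerivative A (fun c => Df c u) D2f := ⟨hlin2, hderiv2⟩
  have h0 : (0 : ℝ) ∈ Icc 0 1 := left_mem_Icc.2 zero_le_one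
  have h1 : (1 : ℝ) ∈ Icc 0 1 := right_mem_Icc.2 zero_le_one
  have inner : ∀ r ∈ Icc (0 : ℝ) 1, ∫ s in (0 : ℝ)..1, D2f (a + r • u + s • v) v
      = Df (a + r • u + v) u - Df (a + r • u) u := fun r hr =>
    (hDf.sub_eq_integral (hrect r hr)
      (hcont2.comp (continuous_const.prodMk continuous_id).continuousOn fun _ hs => ⟨hr, hs⟩)).symm
  have hcont_top := hcont1 1 h1
  have hcont_bot := hcont1 0 h0
  simp only [one_smul, zero_smul, add_zero] at hcont_top hcont_bot
  have outer_top : f (a + u + v) - f (a + v) = ∫ r in (0 : ℝ)..1, Df (a + r • u + v) u := by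
    have hseg : ∀ r ∈ Icc (0 : ℝ) 1, a + v + r • u ∈ A := fun r hr => by
      simpa only [one_smul, add_right_comm a _ v] using hrect r hr 1 h1
    simpa only [add_right_comm a v] using
      hf.sub_eq_integral hseg (by simpa only [add_right_comm a v] using hcont_top)
  have outer_bot : f (a + u) - f a = ∫ r in (0 : ℝ)..1, Df (a + r • u) u :=
    hf.sub_eq_integral (fun r hr => by simpa only [zero_smul, add_zero] using hrect r hr 0 h0)
      hcont_bot
  rw [intervalIntegral.integral_congr fun r hr => inner r (by rwa [uIcc_of_le zero_le_one] at hr),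
    intervalIntegral.integral_sub (hcont_top.intervalIntegrable_of_Icc zero_le_one)
      (hcont_bot.intervalIntegrable_of_Icc zero_le_one), ← outer_top, ← outer_bot]
  ring

/-- Second-order fundamental theorem of calculus for linear
derivatives: if `Df` is a linear derivative of `f` on a nonempty convex set `A`,
the map `c ↦ Df c u` admits a linear derivative `D2f` (in the direction slot),
`(r, s) ↦ D2f (a + r • u + s • v) v` is jointly continuous on `[0,1]²`, and for
each `s ∈ [0,1]` the map `r ↦ Df (a + r • u + s • v) u` is continuous on `[0,1]`,
then the second-order difference of `f` over the rectangle equals the double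
integral of `D2f`. -/
theorem secondOrder_linearDerivative_rect_eq_double_integral
    {E : Type*} [AddCommGroup E] [Module ℝ E]
    (A : Set E) (hA : Convex ℝ A) (hAne : A.Nonempty)
    (f : E → ℝ) (Df : E → E → ℝ)
    (hlin : ∀ c ∈ A, IsLinearMap ℝ (Df c))
    (hderiv : ∀ c ∈ A, ∀ c' ∈ A,
      Tendsto (fun ε : ℝ => (f (c + ε • (c' - c)) - f c) / ε) (nhdsWithin 0 (Set.Ioi 0))
        (nhds (Df c (c' - c))))
    (a : E) (ha : a ∈ A) (u v : E)
    (hrect : ∀ r ∈ Set.Icc (0:ℝ) 1, ∀ s ∈ Set.Icc (0:ℝ) 1, a + r • u + s • v ∈ A)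
    (D2f : E → E → ℝ)
    (hlin2 : ∀ c ∈ A, IsLinearMap ℝ (D2f c))
    (hderiv2 : ∀ c ∈ A, ∀ c' ∈ A,
      Tendsto (fun ε : ℝ => (Df (c + ε • (c' - c)) u - Df c u) / ε) (nhdsWithin 0 (Set.Ioi 0))
        (nhds (D2f c (c' - c))))
    (hcont2 : ContinuousOn (fun p : ℝ × ℝ => D2f (a + p.1 • u + p.2 • v) v)
      (Set.Icc 0 1 ×ˢ Set.Icc 0 1))
    (hcont1 : ∀ s ∈ Set.Icc (0:ℝ) 1,
      ContinuousOn (fun r : ℝ => Df (a + r • u + s • v) u) (Set.Icc 0 1)) :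
    f (a + u + v) - f (a + u) - f (a + v) + f a
      = ∫ r in (0:ℝ)..1, ∫ s in (0:ℝ)..1, D2f (a + r • u + s • v) v :=
  secondOrder_linearDerivative_rect_eq_double_integral_general A f Df hlin hderiv a u v hrect D2f
    hlin2 hderiv2 hcont2 hcont1
end
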